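/- arXiv:math/0608458 — 3 statements merged into one kernel-verified Lean document; each statement's English description precedes it below -/
import Mathlib

section
/- Let q be a prime power, F a finite field with q elements, n a positive integer, and V a 2n-dimensional F-vector space equipped with a nondegenerate alternating bilinear form B. Then the number of n-dimensional F-subspaces W of V that are totally isotropic for B (i.e., B(x,y) = 0 for all x, y in W) equals the product over i = 1, ..., n of (q^i + 1). -/
/-!
Double count the pairs `(v, W)` with `W` Lagrangian and `0 ≠ v ∈ W`. Every `W` contains
`q ^ n - 1` nonzero vectors, and for `v ≠ 0` the map `W ↦ W / F v` identifies the Lagrangians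
through `v` with the Lagrangians of the `2n - 2`-dimensional symplectic space `v^⊥ / F v`.
Hence `L_n (q ^ n - 1) = (q ^ (2n) - 1) L_{n-1}`, i.e. `L_n = (q ^ n + 1) L_{n-1}`.
-/

open Module Submodule Finset

namespace LinearMap

variable {R M N : Type*} [CommRing R] [AddCommGroup M] [Module R M] [AddCommGroup N] [Module R N]

def IsTotallyIsotropic (B : M →ₗ[R] M →ₗ[R] R) (W : Submodule R M) : Prop :=
  ∀ x ∈ W, ∀ y ∈ W, B x y = 0

theorem isTotallyIsotropic_map_iff (B : N →ₗ[R] N →ₗ[R] R) (f : M →ₗ[R] N)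
    (W : Submodule R M) :
    B.IsTotallyIsotropic (W.map f) ↔ (B.compl₁₂ f f).IsTotallyIsotropic W := by
  simp [IsTotallyIsotropic]

end LinearMap

namespace Submodule

variable {F M : Type*} [Field F] [AddCommGroup M] [Module F M] [FiniteDimensional F M]

theorem finrank_map_mkQ_add_finrank {N U : Submodule F M} (h : N ≤ U) :
    finrank F (U.map N.mkQ) + finrank F N = finrank F U := by
  have := (N.mkQ.domRestrict U).finrank_range_add_finrank_ker
  rwa [LinearMap.range_domRestrict, LinearMap.ker_domRestrict, ker_mkQ,
    (comapSubtypeEquivOfLe h).finrank_eq] at this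

end Submodule

namespace LinearMap

variable {F V : Type*} [Field F] [AddCommGroup V] [Module F V]
variable (B : V →ₗ[F] V →ₗ[F] F) (x : V)

def reductionLine : Submodule F (ker (B x)) := (F ∙ x).comap (ker (B x)).subtype

/-- `x^⊥ / F x`, with `x^⊥ = ker (B x)`. -/
abbrev Reduction : Type _ := ker (B x) ⧸ B.reductionLine x

theorem reductionLine_le_ker :
    B.reductionLine x ≤ ker (B.domRestrict₁₂ (ker (B x)) (ker (B x))) := by
  rintro u hu
  obtain ⟨c, hc⟩ := mem_span_singleton.mp hu
  ext w
  change B u w = 0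
  rw [← show c • x = u from hc, map_smul, smul_apply, mem_ker.mp w.2, smul_zero]

variable {B}

def IsRefl.reducedForm (hB : B.IsRefl) : B.Reduction x →ₗ[F] B.Reduction x →ₗ[F] F :=
  IsRefl.liftQ₂ _ _ (hB.domRestrict _) (B.reductionLine_le_ker x)

variable (hB : B.IsRefl)

theorem IsAlt.reducedForm (hA : B.IsAlt) : (hA.isRefl.reducedForm x).IsAlt := by
  rintro ⟨u⟩
  exact hA u

theorem SeparatingLeft.reducedForm (hS : B.SeparatingLeft) :
    (hB.reducedForm x).SeparatingLeft := by
  rintro ⟨u⟩ hu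
  have hker : ker (B x) ≤ ker (B u) := fun w hw => hu (Submodule.Quotient.mk ⟨w, hw⟩)
  obtain ⟨c, hc⟩ : ∃ c : F, c • B x = B u := by
    simpa [mem_span_singleton] using
      mem_span_of_iInf_ker_le_ker (L := fun _ : Unit => B x) (by simpa using hker)
  have : (u : V) = c • x := (sub_eq_zero.mp (hS _ fun y => by simp [← hc])).symm
  exact (Submodule.Quotient.mk_eq_zero _).mpr (mem_span_singleton.mpr ⟨c, this.symm⟩)

variable {x}

theorem finrank_reductionLine (hx : x ≠ 0) (hxx : B x x = 0) :
    finrank F (B.reductionLine x) = 1 := by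
  have hle : F ∙ x ≤ ker (B x) := (span_singleton_le_iff_mem _ _).mpr hxx
  rw [reductionLine, (comapSubtypeEquivOfLe hle).finrank_eq, finrank_span_singleton hx]

theorem finrank_reduction_add_two [FiniteDimensional F V] (hS : B.SeparatingLeft) (hx : x ≠ 0)
    (hxx : B x x = 0) : finrank F (B.Reduction x) + 2 = finrank F V := by
  have hBx : B x ≠ 0 := fun h => hx (hS x fun y => by simp [h])
  rw [← Dual.finrank_ker_add_one_of_ne_zero hBx,
    ← (B.reductionLine x).finrank_quotient_add_finrank, finrank_reductionLine hx hxx]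

theorem IsRefl.isTotallyIsotropic_map_mkQ_iff [FiniteDimensional F V] (hx : x ≠ 0)
    (hxx : B x x = 0) {U : Submodule F (ker (B x))} (hU : B.reductionLine x ≤ U) (m : ℕ) :
    (finrank F (U.map (B.reductionLine x).mkQ) = m ∧
      (hB.reducedForm x).IsTotallyIsotropic (U.map (B.reductionLine x).mkQ)) ↔
    (finrank F (U.map (ker (B x)).subtype) = m + 1 ∧
      B.IsTotallyIsotropic (U.map (ker (B x)).subtype)) := by
  have := finrank_map_mkQ_add_finrank hU
  rw [finrank_reductionLine hx hxx] at this
  rw [isTotallyIsotropic_map_iff, isTotallyIsotropic_map_iff, finrank_map_subtype_eq]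
  -- the reduced form composed with `mkQ` is `B` restricted to `x^⊥`, by definition of `liftQ₂`
  exact and_congr (by omega) Iff.rfl

theorem IsTotallyIsotropic.le_ker {W : Submodule F V} (hW : B.IsTotallyIsotropic W)
    (hx : x ∈ W) : W ≤ ker (B x) :=
  fun w hw => hW x hx w hw

theorem reductionLine_le_comap {W : Submodule F V} (hx : x ∈ W) :
    B.reductionLine x ≤ W.comap (ker (B x)).subtype :=
  fun _ hu => (span_singleton_le_iff_mem _ _).mpr hx hu

def IsRefl.reductionEquiv [FiniteDimensional F V] (hx : x ≠ 0) (hxx : B x x = 0) (m : ℕ) :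
    {W : Submodule F V // (finrank F W = m + 1 ∧ B.IsTotallyIsotropic W) ∧ x ∈ W} ≃
      {W' : Submodule F (B.Reduction x) //
        finrank F W' = m ∧ (hB.reducedForm x).IsTotallyIsotropic W'} where
  toFun W := ⟨(W.1.comap (ker (B x)).subtype).map (B.reductionLine x).mkQ, by
    refine (hB.isTotallyIsotropic_map_mkQ_iff hx hxx (reductionLine_le_comap W.2.2) m).mpr ?_
    rw [map_comap_subtype, inf_eq_right.mpr (W.2.1.2.le_ker W.2.2)]
    exact W.2.1⟩
  invFun W' := ⟨(W'.1.comap (B.reductionLine x).mkQ).map (ker (B x)).subtype, by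
    refine ⟨(hB.isTotallyIsotropic_map_mkQ_iff hx hxx (le_comap_mkQ _ _) m).mp ?_, ?_⟩
    · rw [map_comap_eq_of_surjective (mkQ_surjective _)]
      exact W'.2
    · exact ⟨⟨x, mem_ker.mpr hxx⟩, le_comap_mkQ _ _ (mem_span_singleton_self x), rfl⟩⟩
  left_inv W := by
    ext1
    dsimp only
    rw [comap_map_mkQ, sup_eq_right.mpr (reductionLine_le_comap W.2.2), map_comap_subtype,
      inf_eq_right.mpr (W.2.1.2.le_ker W.2.2)]
  right_inv W' := by
    ext1
    dsimp only
    rw [comap_map_eq_of_injective (injective_subtype _),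
      map_comap_eq_of_surjective (mkQ_surjective _)]

end LinearMap

section Counting

variable {F V : Type*} [Field F] [Fintype F] [AddCommGroup V] [Module F V] [FiniteDimensional F V]

theorem Submodule.natCard_mem_ne_zero (W : Submodule F V) :
    Nat.card {v : V // v ∈ W ∧ v ≠ 0} = Fintype.card F ^ finrank F W - 1 := by
  classical
  have : Finite V := Module.finite_of_finite F
  have : Fintype V := Fintype.ofFinite V
  rw [← Nat.card_congr (Equiv.subtypeSubtypeEquivSubtypeInter (· ∈ W) (· ≠ 0)),
    Nat.card_eq_fintype_card, Fintype.card_subtype_compl]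
  simp_rw [ZeroMemClass.coe_eq_zero]
  rw [Fintype.card_subtype_eq, card_eq_pow_finrank (K := F)]

theorem Submodule.natCard_mul_eq_of_forall_natCard_mem {p : Submodule F V → Prop} {m P : ℕ}
    (hp : ∀ W, p W → finrank F W = m)
    (hP : ∀ x : V, x ≠ 0 → Nat.card {W // p W ∧ x ∈ W} = P) :
    Nat.card {W // p W} * (Fintype.card F ^ m - 1) = (Fintype.card F ^ finrank F V - 1) * P := by
  classical
  have : Finite V := Module.finite_of_finite F
  have : Fintype V := Fintype.ofFinite V
  have : Finite (Submodule F V) := Finite.of_injective _ SetLike.coe_injective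
  have : Fintype (Submodule F V) := Fintype.ofFinite _
  have hcard {α : Type _} [Fintype α] (q : α → Prop) [DecidablePred q] :
      Nat.card {a // q a} = #{a | q a} := by
    rw [Nat.card_eq_fintype_card, Fintype.card_subtype]
  have := Finset.card_mul_eq_card_mul (s := {W | p W}) (t := {v : V | v ≠ 0})
    (fun W v => v ∈ W) (m := Fintype.card F ^ m - 1) (n := P)
    (fun W hW => by
      rw [Finset.bipartiteAbove, Finset.filter_filter, ← hcard, ← hp W (by simpa using hW),
        ← natCard_mem_ne_zero W]
      simp only [and_comm])
    (fun x hx => by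
      rw [Finset.bipartiteBelow, Finset.filter_filter, ← hcard, hP x (by simpa using hx)])
  rw [← hcard, ← hcard] at this
  rw [this, ← finrank_top F V, ← natCard_mem_ne_zero ⊤]
  simp only [mem_top, true_and]

end Counting

section Lagrangian

open LinearMap

variable {F : Type*} [Field F]

theorem natCard_isTotallyIsotropic_finrank_zero {V : Type*} [AddCommGroup V] [Module F V]
    [FiniteDimensional F V] (B : V →ₗ[F] V →ₗ[F] F) :
    Nat.card {W : Submodule F V // finrank F W = 0 ∧ B.IsTotallyIsotropic W} = 1 := by
  refine Nat.card_eq_one_iff_unique.mpr ⟨⟨fun W W' => ?_⟩, ⟨⊥, finrank_bot F V, ?_⟩⟩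
  · ext1
    rw [finrank_eq_zero.mp W.2.1, finrank_eq_zero.mp W'.2.1]
  · intro x hx y _
    simp [(mem_bot F).mp hx]

theorem natCard_lagrangian_eq_prod [Fintype F] (n : ℕ) (V : Type*) [AddCommGroup V] [Module F V]
    [FiniteDimensional F V] (B : V →ₗ[F] V →ₗ[F] F) (hA : B.IsAlt) (hS : B.SeparatingLeft)
    (hdim : finrank F V = 2 * n) :
    Nat.card {W : Submodule F V // finrank F W = n ∧ B.IsTotallyIsotropic W} =
      ∏ i ∈ range n, (Fintype.card F ^ (i + 1) + 1) := by
  induction n generalizing V with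
  | zero => simpa using natCard_isTotallyIsotropic_finrank_zero B
  | succ n ih =>
    have hcount := natCard_mul_eq_of_forall_natCard_mem (fun W hW => hW.1) fun x hx =>
      (Nat.card_congr (hA.isRefl.reductionEquiv hx (hA.self_eq_zero x) n)).trans
        (ih _ _ (hA.reducedForm x) (hS.reducedForm x hA.isRefl)
          (by have := finrank_reduction_add_two hS hx (hA.self_eq_zero x); omega))
    set q := Fintype.card F
    have hq : 2 ≤ q ^ (n + 1) :=
      Fintype.one_lt_card.trans_le (Nat.le_self_pow n.succ_ne_zero q)
    have hfactor : q ^ finrank F V - 1 = (q ^ (n + 1) + 1) * (q ^ (n + 1) - 1) := by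
      rw [hdim, pow_mul', ← Nat.sq_sub_sq, one_pow]
    rw [prod_range_succ]
    refine Nat.eq_of_mul_eq_mul_right (by omega : 0 < q ^ (n + 1) - 1) (hcount.trans ?_)
    rw [hfactor]
    ring

end Lagrangian

theorem stmt_0_general (q n : ℕ)
    (F : Type*) [Field F] [Fintype F] (hF : Fintype.card F = q)
    (V : Type*) [AddCommGroup V] [Module F V] [FiniteDimensional F V]
    (hdim : Module.finrank F V = 2 * n)
    (B : V →ₗ[F] V →ₗ[F] F)
    (halt : ∀ x : V, B x x = 0)
    (hnd : ∀ x : V, (∀ y : V, B x y = 0) → x = 0) :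
    Nat.card {W : Submodule F V //
        Module.finrank F W = n ∧ ∀ x ∈ W, ∀ y ∈ W, B x y = 0} =
      ∏ i ∈ Finset.range n, (q ^ (i + 1) + 1) := by
  subst hF
  exact natCard_lagrangian_eq_prod n V B halt hnd hdim

/-- The number of Lagrangian (n-dimensional totally isotropic) subspaces of a
2n-dimensional symplectic space over F_q is ∏_{i=1}^n (q^i + 1). -/
theorem stmt_0 (q n : ℕ) (hq : IsPrimePow q) (hn : 0 < n)
    (F : Type*) [Field F] [Fintype F] (hF : Fintype.card F = q)
    (V : Type*) [AddCommGroup V] [Module F V] [FiniteDimensional F V]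
    (hdim : Module.finrank F V = 2 * n)
    (B : V →ₗ[F] V →ₗ[F] F)
    (halt : ∀ x : V, B x x = 0)
    (hnd : ∀ x : V, (∀ y : V, B x y = 0) → x = 0) :
    Nat.card {W : Submodule F V //
        Module.finrank F W = n ∧ ∀ x ∈ W, ∀ y ∈ W, B x y = 0} =
      ∏ i ∈ Finset.range n, (q ^ (i + 1) + 1) :=
  stmt_0_general q n F hF V hdim B halt hnd
end

section
/- Let q be a prime power, F a finite field with q² elements, and m a positive integer. Then the number of m-tuples (a_1, ..., a_m) in F^m satisfying a_1^{q+1} + a_2^{q+1} + ... + a_m^{q+1} = 0 equals q^{2m-1} + (-1)^m q^m + (-1)^{m-1} q^{m-1}. -/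
/-!
Write `N m` for the number of zeros of `∑ aᵢ^(q+1)` on `F^m`, `F = 𝔽_{q²}`. Since `Fˣ` is
cyclic of order `(q+1)(q-1)`, every nonzero `c` with `c^q = c` has exactly `q+1` preimages
under `x ↦ x^(q+1)`. The sum `∑ aᵢ^(q+1)` is fixed by the Frobenius `x ↦ x^q`, so splitting
off the last coordinate gives `N (m+1) = (q+1) q^(2m) - q N m` with `N 0 = 1`, and the
formula follows by induction.
-/

open Finset

theorem IsCyclic.card_pow_eq_of_pow_eq_one {G : Type*} [CommGroup G] [IsCyclic G] [Finite G]
    {k l : ℕ} (hG : Nat.card G = k * l) {c : G} (hc : c ^ l = 1) :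
    Nat.card {x : G // x ^ k = c} = k := by
  have hk : 0 < k := Nat.pos_of_mul_pos_right (hG ▸ Nat.card_pos)
  have hrange : (powMonoidHom k : G →* G).range = (powMonoidHom l).ker := by
    refine Subgroup.eq_of_le_of_card_ge ?_ ?_
    · rintro _ ⟨x, rfl⟩
      simp [← pow_mul, ← hG, pow_card_eq_one']
    · rw [IsCyclic.card_powMonoidHom_range, IsCyclic.card_powMonoidHom_ker, hG,
        Nat.gcd_mul_left_left, Nat.gcd_mul_right_left, Nat.mul_div_cancel_left _ hk]
  obtain ⟨y, rfl⟩ : c ∈ (powMonoidHom k : G →* G).range := hrange ▸ hc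
  calc Nat.card {x : G // x ^ k = y ^ k}
      = Nat.card (powMonoidHom k : G →* G).ker :=
        Nat.card_congr ((powMonoidHom k).fiberEquivKer y)
    _ = k := by rw [IsCyclic.card_powMonoidHom_ker, hG, Nat.gcd_mul_right_left]

theorem FiniteField.card_pow_eq_of_pow_eq_one {F : Type*} [Field F] [Fintype F] {k l : ℕ}
    (hF : Fintype.card F = k * l + 1) {c : F} (hc : c ^ l = 1) :
    Nat.card {x : F // x ^ k = c} = k := by
  have hkl : 0 < k * l := by
    have := Fintype.one_lt_card (α := F); omega
  have hc0 : c ≠ 0 := fun h => by simp [h, (Nat.pos_of_mul_pos_left hkl).ne'] at hc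
  have hunits : Nat.card Fˣ = k * l := by
    rw [Nat.card_units, Nat.card_eq_fintype_card, hF, Nat.add_sub_cancel]
  refine (Nat.card_congr ?_).trans
    (IsCyclic.card_pow_eq_of_pow_eq_one hunits (c := Units.mk0 c hc0) (by ext; simpa))
  exact
    { toFun x := ⟨Units.mk0 x.1 fun h => hc0 (by
          rw [← x.2, h, zero_pow (Nat.pos_of_mul_pos_right hkl).ne']), by ext; simpa using x.2⟩
      invFun u := ⟨u.1, by simpa [Units.ext_iff] using u.2⟩
      left_inv _ := rfl
      right_inv _ := Subtype.ext (Units.ext rfl) }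

theorem FiniteField.card_pow_add_one_eq {F : Type*} [Field F] [Fintype F] {q : ℕ}
    (hF : Fintype.card F = q ^ 2) {c : F} (hc : c ^ q = c)
    (hc0 : c ≠ 0) : Nat.card {x : F // x ^ (q + 1) = c} = q + 1 := by
  have hq : 1 ≤ q := by
    have := Fintype.one_lt_card (α := F)
    rw [hF] at this
    exact Nat.one_le_iff_ne_zero.mpr (by rintro rfl; simp at this)
  refine FiniteField.card_pow_eq_of_pow_eq_one (l := q - 1) ?_ ?_
  · rw [hF]; zify [hq]; ring
  · refine mul_right_cancel₀ hc0 ?_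
    rw [← pow_succ, Nat.sub_add_cancel hq, hc, one_mul]

theorem FiniteField.pow_add_one_pow_eq {F : Type*} [Field F] [Fintype F] {q : ℕ}
    (hF : Fintype.card F = q ^ 2) (x : F) : (x ^ (q + 1)) ^ q = x ^ (q + 1) := by
  rw [← pow_mul, add_mul, one_mul, ← sq, pow_add, ← hF, FiniteField.pow_card, pow_succ']

theorem FiniteField.neg_sum_pow_add_one_pow_eq {F : Type*} [Field F] [Fintype F] {p n : ℕ}
    [ExpChar F p] (hF : Fintype.card F = (p ^ n) ^ 2) {ι : Type*} (s : Finset ι) (a : ι → F) :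
    (-∑ i ∈ s, a i ^ (p ^ n + 1)) ^ p ^ n = -∑ i ∈ s, a i ^ (p ^ n + 1) := by
  rw [← iterateFrobenius_def, map_neg, map_sum]
  simp only [iterateFrobenius_def, FiniteField.pow_add_one_pow_eq hF]

theorem Fintype.card_sum_eq_zero_fin_succ {α G : Type*} [Fintype α] [AddCommGroup G]
    [DecidableEq G] (f : α → G) (m : ℕ) :
    Nat.card {a : Fin (m + 1) → α // ∑ i, f (a i) = 0} =
      ∑ b : Fin m → α, Nat.card {x : α // f x = -∑ i, f (b i)} := by
  classical
  simp only [Nat.card_eq_fintype_card, Fintype.card_subtype, card_filter]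
  rw [← (Fin.consEquiv fun _ => α).sum_comp, Fintype.sum_prod_type_right]
  refine Fintype.sum_congr _ _ fun b => Fintype.sum_congr _ _ fun x => ?_
  simp [Fin.sum_univ_succ, eq_neg_iff_add_eq_zero]

/-- `|I_m|`, for `F` of order `q²`. -/
noncomputable def hermitianZeroCount (F : Type*) [Field F] (q m : ℕ) : ℕ :=
  Nat.card {a : Fin m → F // ∑ i, a i ^ (q + 1) = 0}

section

variable {F : Type*} [Field F] [Fintype F] {p n : ℕ} [ExpChar F p]

theorem hermitianZeroCount_succ (hF : Fintype.card F = (p ^ n) ^ 2) (m : ℕ) :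
    (hermitianZeroCount F (p ^ n) (m + 1) : ℤ) =
      (p ^ n + 1) * (p ^ n) ^ (2 * m) - p ^ n * hermitianZeroCount F (p ^ n) m := by
  classical
  have hfiber (b : Fin m → F) :
      (Nat.card {x : F // x ^ (p ^ n + 1) = -∑ i, b i ^ (p ^ n + 1)} : ℤ) =
        (p ^ n + 1) - p ^ n * if ∑ i, b i ^ (p ^ n + 1) = 0 then 1 else 0 := by
    split_ifs with hb
    · simp [hb]
    · rw [FiniteField.card_pow_add_one_eq hF (FiniteField.neg_sum_pow_add_one_pow_eq hF _ _)
        (neg_ne_zero.mpr hb)]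
      push_cast; ring
  rw [hermitianZeroCount, Fintype.card_sum_eq_zero_fin_succ (· ^ (p ^ n + 1)), Nat.cast_sum]
  simp only [hfiber, sum_sub_distrib, ← mul_sum, sum_const, card_univ, Fintype.card_fun, hF,
    Fintype.card_fin, ← pow_mul, sum_boole]
  simp only [hermitianZeroCount, Nat.card_eq_fintype_card, Fintype.card_subtype]
  ring

theorem hermitianZeroCount_succ_closed_form (hF : Fintype.card F = (p ^ n) ^ 2) (m : ℕ) :
    (hermitianZeroCount F (p ^ n) (m + 1) : ℤ) =
      (p ^ n : ℤ) ^ (2 * m + 1) + (-1) ^ (m + 1) * (p ^ n : ℤ) ^ (m + 1) +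
        (-1) ^ m * (p ^ n : ℤ) ^ m := by
  induction m with
  | zero =>
    rw [hermitianZeroCount_succ hF]
    simp [hermitianZeroCount]
  | succ m ih =>
    rw [hermitianZeroCount_succ hF, ih]
    ring

end

/-- The number of m-tuples over F_{q²} with a_1^{q+1} + ⋯ + a_m^{q+1} = 0 equals
q^{2m-1} + (-1)^m q^m + (-1)^{m-1} q^{m-1}. -/
theorem stmt_1 (q m : ℕ) (hq : IsPrimePow q) (hm : 0 < m)
    (F : Type*) [Field F] [Fintype F] (hF : Fintype.card F = q ^ 2) :
    (Nat.card {a : Fin m → F // ∑ i, (a i) ^ (q + 1) = 0} : ℤ) =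
      (q : ℤ) ^ (2 * m - 1) + (-1) ^ m * (q : ℤ) ^ m + (-1) ^ (m - 1) * (q : ℤ) ^ (m - 1) := by
  obtain ⟨p, n, hp, -, rfl⟩ := hq
  have : Fact p.Prime := ⟨Nat.prime_iff.mpr hp⟩
  have : CharP F p := charP_of_card_eq_prime_pow (hF.trans (pow_mul p n 2).symm)
  obtain ⟨k, rfl⟩ : ∃ k, m = k + 1 := ⟨m - 1, by omega⟩
  rw [show 2 * (k + 1) - 1 = 2 * k + 1 by omega, Nat.add_sub_cancel]
  exact_mod_cast hermitianZeroCount_succ_closed_form hF k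
end

section
/- Let q be a prime power, F a finite field with q elements, and n an integer with n ≥ 2. Then |Sp_{2n}(F)| = (q^{2n} − 1) · q^{2n−1} · |Sp_{2n−2}(F)|. -/
open Matrix

/-- The symplectic group of 2m×2m matrices M over F with M J Mᵀ = J,
where J = [[0, I],[−I, 0]]. -/
def Sp (F : Type*) [Field F] (m : ℕ) :
    Set (Matrix (Fin m ⊕ Fin m) (Fin m ⊕ Fin m) F) :=
  {M | M * Matrix.fromBlocks 0 1 (-1) 0 * Mᵀ = Matrix.fromBlocks 0 1 (-1) 0}

/-!
A matrix lies in `Sp F n` iff its rows `(e₁, …, eₙ, f₁, …, fₙ)` have Gram matrix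
`[[0, I], [-I, 0]]` for the standard form on `F²ⁿ`. So we count such symplectic families in an
arbitrary nondegenerate alternating space `V` of dimension `2n` over `F = 𝔽_q`. The first pair
`(e₁, f₁)` is any pair with `B e₁ f₁ = 1`: `e₁ ≠ 0` is arbitrary and `f₁` then ranges over an
affine hyperplane, giving `(q²ⁿ - 1) q²ⁿ⁻¹` choices. The remaining vectors are exactly a
symplectic family in `{e₁, f₁}^⊥`, which is again nondegenerate alternating, of dimension
`2n - 2`. By induction their number is `∏_{i < n} (q^{2i+2} - 1) q^{2i+1}`.
-/

open Module

section Symplectic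

variable {F V : Type*} [Field F] [AddCommGroup V] [Module F V]

theorem LinearMap.natCard_setOf_apply_eq [FiniteDimensional F V] {f : V →ₗ[F] F}
    (hf : f ≠ 0) (c : F) : Nat.card {x | f x = c} = Nat.card F ^ (finrank F V - 1) := by
  have hsurj := LinearMap.surjective_of_ne_zero hf
  have hker : finrank F (LinearMap.ker f) = finrank F V - 1 := by
    have := finrank_range_add_finrank_ker f
    rw [range_eq_top.mpr hsurj, finrank_top, finrank_self] at this
    omega
  rw [← hker, ← Module.natCard_eq_pow_finrank]
  exact Nat.card_congr (f.toAddMonoidHom.fiberEquivKerOfSurjective hsurj c)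

def symplecticGram (n : ℕ) : Matrix (Fin n ⊕ Fin n) (Fin n ⊕ Fin n) F :=
  fromBlocks 0 1 (-1) 0

theorem symplecticGram_map_succ {k : ℕ} (a b : Fin k ⊕ Fin k) :
    symplecticGram (F := F) (k + 1) (Sum.map Fin.succ Fin.succ a) (Sum.map Fin.succ Fin.succ b) =
      symplecticGram k a b := by
  rcases a with a | a <;> rcases b with b | b <;> simp [symplecticGram, one_apply]

theorem symplecticGram_eq_neg_J (n : ℕ) : symplecticGram n = -J (Fin n) F := by
  simp [symplecticGram, J, fromBlocks_neg]

namespace LinearMap.BilinForm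

def symplecticFamilies (B : LinearMap.BilinForm F V) (n : ℕ) : Set (Fin n ⊕ Fin n → V) :=
  {s | ∀ a b, B (s a) (s b) = symplecticGram n a b}

def hyperbolicPairs (B : LinearMap.BilinForm F V) : Set (V × V) :=
  {p | B p.1 p.2 = 1}

def pairOrthogonal (B : LinearMap.BilinForm F V) (u v : V) : Submodule F V :=
  LinearMap.ker (B u) ⊓ LinearMap.ker (B v)

variable {B : LinearMap.BilinForm F V} {u v : V} {k : ℕ}

theorem mem_pairOrthogonal {x : V} : x ∈ B.pairOrthogonal u v ↔ B u x = 0 ∧ B v x = 0 :=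
  Iff.rfl

theorem IsAlt.restrict (hB : B.IsAlt) (W : Submodule F V) : (B.restrict W).IsAlt :=
  fun x => hB x

section HyperbolicPair

variable (hB : B.IsAlt) (huv : B u v = 1)
include hB huv

theorem IsAlt.apply_swap_eq_neg_one : B v u = -1 := by
  rw [← hB.neg_eq, huv]

theorem IsAlt.add_smul_sub_smul_mem_pairOrthogonal (x : V) :
    x + B v x • u - B u x • v ∈ B.pairOrthogonal u v := by
  simp [mem_pairOrthogonal, hB.self_eq_zero, huv, hB.apply_swap_eq_neg_one huv]

theorem IsAlt.finrank_pairOrthogonal_add_two [FiniteDimensional F V] :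
    finrank F (B.pairOrthogonal u v) + 2 = finrank F V := by
  have hsurj : Function.Surjective ((B u).prod (B v)) := fun p =>
    ⟨p.2 • (-u) + p.1 • v, by simp [hB.self_eq_zero, huv, hB.apply_swap_eq_neg_one huv]⟩
  have := finrank_range_add_finrank_ker ((B u).prod (B v))
  rw [range_eq_top.mpr hsurj, finrank_top, ker_prod, finrank_prod, finrank_self] at this
  rw [pairOrthogonal]
  omega

theorem IsAlt.nondegenerate_restrict_pairOrthogonal (hnd : B.Nondegenerate) :
    (B.restrict (B.pairOrthogonal u v)).Nondegenerate := by
  refine ((hB.restrict _).isRefl.nondegenerate_iff_separatingLeft).mpr ?_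
  rintro ⟨w, hwu, hwv⟩ hw
  refine Subtype.ext (hnd.1 w fun x => ?_)
  -- `x` differs from a vector of `{u, v}^⊥` by a combination of `u` and `v`
  have hy : B w (x + B v x • u - B u x • v) = 0 :=
    hw ⟨_, hB.add_smul_sub_smul_mem_pairOrthogonal huv x⟩
  simpa [hB.eq_iff.mp hwu, hB.eq_iff.mp hwv] using hy

theorem cons_mem_symplecticFamilies {t : Fin k ⊕ Fin k → B.pairOrthogonal u v}
    (ht : t ∈ (B.restrict (B.pairOrthogonal u v)).symplecticFamilies k) :
    Sum.elim (Fin.cons u fun i => t (.inl i)) (Fin.cons v fun i => t (.inr i)) ∈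
      B.symplecticFamilies (k + 1) := by
  have hut (a) : B u (t a) = 0 := (t a).2.1
  have hvt (a) : B v (t a) = 0 := (t a).2.2
  have htu (a) : B (t a) u = 0 := hB.eq_iff.mp (hut a)
  have htv (a) : B (t a) v = 0 := hB.eq_iff.mp (hvt a)
  have htt (a b) : B (t a) (t b) = symplecticGram k a b := ht a b
  intro a b
  rcases a with a | a <;> rcases b with b | b <;> cases a using Fin.cases <;>
    cases b using Fin.cases <;>
    simp [symplecticGram, one_apply, hB.self_eq_zero, huv, hB.apply_swap_eq_neg_one huv,
      hut, hvt, htu, htv, htt, (Fin.succ_ne_zero _).symm, Fin.succ_ne_zero]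

end HyperbolicPair

theorem map_succ_mem_pairOrthogonal {s : Fin (k + 1) ⊕ Fin (k + 1) → V}
    (hs : s ∈ B.symplecticFamilies (k + 1)) (a : Fin k ⊕ Fin k) :
    s (Sum.map Fin.succ Fin.succ a) ∈ B.pairOrthogonal (s (.inl 0)) (s (.inr 0)) := by
  constructor <;> rcases a with a | a <;>
    simp [hs _ _, symplecticGram, one_apply, (Fin.succ_ne_zero _).symm]

def headPair (s : B.symplecticFamilies (k + 1)) : B.hyperbolicPairs :=
  ⟨(s.1 (.inl 0), s.1 (.inr 0)), by
    simpa [hyperbolicPairs, symplecticGram] using s.2 (.inl 0) (.inr 0)⟩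

def headPairFiberEquiv (hB : B.IsAlt) (p : B.hyperbolicPairs) :
    {s : B.symplecticFamilies (k + 1) // headPair s = p} ≃
      (B.restrict (B.pairOrthogonal p.1.1 p.1.2)).symplecticFamilies k where
  toFun
    | ⟨⟨s, hs⟩, h⟩ =>
      ⟨fun a => ⟨s (Sum.map Fin.succ Fin.succ a), h ▸ map_succ_mem_pairOrthogonal hs a⟩,
        fun a b => (hs _ _).trans (symplecticGram_map_succ a b)⟩
  invFun t :=
    ⟨⟨Sum.elim (Fin.cons p.1.1 fun i => t.1 (.inl i)) (Fin.cons p.1.2 fun i => t.1 (.inr i)),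
      cons_mem_symplecticFamilies hB p.2 t.2⟩, rfl⟩
  left_inv := by
    rintro ⟨⟨s, hs⟩, rfl⟩
    ext a
    rcases a with a | a <;> cases a using Fin.cases <;> rfl
  right_inv t := by
    ext a
    rcases a with a | a <;> rfl

theorem natCard_symplecticFamilies_succ [Finite V] (hB : B.IsAlt) {c : ℕ}
    (hc : ∀ p : B.hyperbolicPairs,
      Nat.card ((B.restrict (B.pairOrthogonal p.1.1 p.1.2)).symplecticFamilies k) = c) :
    Nat.card (B.symplecticFamilies (k + 1)) = Nat.card B.hyperbolicPairs * c := by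
  have := Fintype.ofFinite B.hyperbolicPairs
  rw [← Nat.card_congr (Equiv.sigmaFiberEquiv headPair), Nat.card_sigma]
  simp [Nat.card_congr (headPairFiberEquiv hB _), hc, Nat.card_eq_fintype_card]

section Finite

variable [Finite F]

local notation "q" => Nat.card F

theorem natCard_hyperbolicPairs [FiniteDimensional F V] (hB : B.SeparatingLeft) :
    Nat.card B.hyperbolicPairs = (q ^ finrank F V - 1) * q ^ (finrank F V - 1) := by
  classical
  have := Module.finite_of_finite F (M := V)
  have := Fintype.ofFinite V
  have hfiber (u : V) :
      Nat.card {v // B u v = 1} = if u = 0 then 0 else q ^ (finrank F V - 1) := by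
    split_ifs with hu
    · simp [hu]
    · exact (B u).natCard_setOf_apply_eq (fun h => hu (hB u fun v => by simp [h])) 1
  rw [show Nat.card B.hyperbolicPairs = Nat.card (Σ u, {v // B u v = 1}) from
    Nat.card_congr (Equiv.subtypeProdEquivSigmaSubtype fun u v => B u v = 1), Nat.card_sigma]
  simp only [hfiber, Finset.sum_ite, Finset.sum_const_zero, Finset.sum_const, smul_eq_mul]
  rw [zero_add, Finset.filter_ne', Finset.card_erase_of_mem (Finset.mem_univ _), Finset.card_univ,
    ← Nat.card_eq_fintype_card, Module.natCard_eq_pow_finrank (K := F)]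

/-- The induction runs over all nondegenerate alternating spaces, not only `F²ᵏ` with the
standard form, because `{u, v}^⊥` comes with no preferred coordinates. -/
theorem natCard_symplecticFamilies [FiniteDimensional F V] (hB : B.IsAlt)
    (hnd : B.Nondegenerate) (hdim : finrank F V = 2 * k) :
    Nat.card (B.symplecticFamilies k) =
      ∏ i ∈ Finset.range k, (q ^ (2 * i + 2) - 1) * q ^ (2 * i + 1) := by
  induction k generalizing V with
  | zero =>
    have : B.symplecticFamilies 0 = Set.univ :=
      Set.eq_univ_of_forall fun s a => a.elim Fin.elim0 Fin.elim0
    simp [this]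
  | succ k ih =>
    have := Module.finite_of_finite F (M := V)
    rw [natCard_symplecticFamilies_succ hB fun p => ih (hB.restrict _)
        (hB.nondegenerate_restrict_pairOrthogonal p.2 hnd)
        (by have := hB.finrank_pairOrthogonal_add_two p.2; omega),
      natCard_hyperbolicPairs hnd.1, hdim, Finset.prod_range_succ,
      show 2 * (k + 1) = 2 * k + 2 by ring, show 2 * k + 2 - 1 = 2 * k + 1 by omega, mul_comm]

end Finite

end LinearMap.BilinForm

variable (F) in
def symplecticForm (n : ℕ) : LinearMap.BilinForm F (Fin n ⊕ Fin n → F) :=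
  Matrix.toLinearMap₂' F (symplecticGram n)

theorem symplecticForm_isAlt (n : ℕ) : (symplecticForm F n).IsAlt := by
  intro x
  simp only [symplecticForm, symplecticGram, Matrix.toLinearMap₂'_apply', fromBlocks_mulVec]
  nth_rw 1 [← Sum.elim_comp_inl_inr x]
  simp only [sumElim_dotProduct_sumElim, zero_mulVec, zero_add, add_zero, neg_mulVec, one_mulVec,
    dotProduct_comm (x ∘ Sum.inr), neg_dotProduct, add_neg_cancel]

theorem symplecticForm_nondegenerate (n : ℕ) : (symplecticForm F n).Nondegenerate := by
  refine LinearMap.nondegenerate_toLinearMap₂'_iff_det_ne_zero.mpr ?_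
  rw [symplecticGram_eq_neg_J]
  exact (SymplecticGroup.symplectic_det
    (SymplecticGroup.neg_mem (SymplecticGroup.J_mem _ _))).ne_zero

theorem Sp_eq_symplecticFamilies (n : ℕ) :
    Sp F n = (symplecticForm F n).symplecticFamilies n := by
  ext M
  simp only [Sp, LinearMap.BilinForm.symplecticFamilies, symplecticForm, symplecticGram,
    Set.mem_ofPred_eq, ← Matrix.ext_iff, mul_mul_apply, transpose_transpose,
    Matrix.toLinearMap₂'_apply']
  exact Iff.rfl

theorem natCard_Sp [Finite F] (n : ℕ) :
    Nat.card (Sp F n) =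
      ∏ i ∈ Finset.range n, (Nat.card F ^ (2 * i + 2) - 1) * Nat.card F ^ (2 * i + 1) := by
  rw [Sp_eq_symplecticFamilies]
  exact LinearMap.BilinForm.natCard_symplecticFamilies (symplecticForm_isAlt n)
    (symplecticForm_nondegenerate n) (by simp [two_mul])

end Symplectic

theorem stmt_4_general (q n : ℕ) (hn : 2 ≤ n)
    (F : Type*) [Field F] [Fintype F] (hF : Fintype.card F = q) :
    Nat.card (Sp F n) = (q ^ (2 * n) - 1) * q ^ (2 * n - 1) * Nat.card (Sp F (n - 1)) := by
  obtain ⟨k, rfl⟩ : ∃ k, n = k + 1 := ⟨n - 1, by omega⟩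
  rw [natCard_Sp, natCard_Sp, Nat.card_eq_fintype_card, hF, Nat.add_sub_cancel,
    Finset.prod_range_succ, mul_comm, show 2 * (k + 1) = 2 * k + 2 by ring,
    show 2 * k + 2 - 1 = 2 * k + 1 by omega]

/-- The recursion |Sp_{2n}(F_q)| = (q^{2n} − 1) q^{2n−1} |Sp_{2n−2}(F_q)|. -/
theorem stmt_4 (q n : ℕ) (hq : IsPrimePow q) (hn : 2 ≤ n)
    (F : Type*) [Field F] [Fintype F] (hF : Fintype.card F = q) :
    Nat.card (Sp F n) = (q ^ (2 * n) - 1) * q ^ (2 * n - 1) * Nat.card (Sp F (n - 1)) :=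
  stmt_4_general q n hn F hF
end
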